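/- A homeomorphism f of a first countable, locally compact, paracompact Hausdorff space X has the topological shadowing property if and only if f^k has the topological shadowing property for every nonzero integer k. -/

import Mathlib

open Metric Filter Topology

def hpow {X : Type*} [TopologicalSpace X] (f : X ≃ₜ X) : ℕ → X ≃ₜ X
  | 0 => Homeomorph.refl X
  | n + 1 => (hpow f n).trans f

def hzpow {X : Type*} [TopologicalSpace X] (f : X ≃ₜ X) : ℤ → X ≃ₜ X
  | Int.ofNat n => hpow f n
  | Int.negSucc n => (hpow f (n + 1)).symm

/-- Topological shadowing property, phrased with neighborhoods of the diagonal. -/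
def TSPTop {X : Type*} [TopologicalSpace X] (f : X ≃ₜ X) : Prop :=
  ∀ E : Set (X × X), E ∈ nhdsSet (Set.diagonal X) →
    ∃ D ∈ nhdsSet (Set.diagonal X),
      ∀ x : ℤ → X, (∀ n : ℤ, (f (x n), x (n + 1)) ∈ D) →
        ∃ y : X, ∀ n : ℤ, (hzpow f n y, x n) ∈ E

/-!
If `f` has the shadowing property, so does `f⁻¹`: a pseudo-orbit of `f⁻¹` read backwards is a
pseudo-orbit of `f` for the neighbourhood `{(a, b) | (f b, f a) ∈ D}` of the diagonal. For
`k > 0`, a `D`-pseudo-orbit `(xₙ)` of `f ^ k` is refined into the `D`-pseudo-orbit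
`f ^ r (x_q)`, indexed by `q k + r` with `0 ≤ r < k`, of `f`, whose only inexact steps are those
of `(xₙ)`; a point `E`-shadowing the refined
sequence under `f` also `E`-shadows `(xₙ)` under `f ^ k`.
-/

open Set

section

variable {X : Type*} [TopologicalSpace X]

theorem hpow_eq_pow (f : X ≃ₜ X) (n : ℕ) : hpow f n = f ^ n := by
  induction n with
  | zero => rfl
  | succ n ih => rw [pow_succ', ← ih]; rfl

theorem hzpow_eq_zpow (f : X ≃ₜ X) (n : ℤ) : hzpow f n = f ^ n := by
  cases n with
  | ofNat n => exact hpow_eq_pow f n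
  | negSucc n => rw [zpow_negSucc, ← hpow_eq_pow]; rfl

def IsPseudoOrbit (f : X → X) (D : Set (X × X)) (x : ℤ → X) : Prop :=
  ∀ n, (f (x n), x (n + 1)) ∈ D

theorem tspTop_iff (f : X ≃ₜ X) :
    TSPTop f ↔ ∀ E ∈ 𝓝ˢ (diagonal X), ∃ D ∈ 𝓝ˢ (diagonal X),
      ∀ x, IsPseudoOrbit f D x → ∃ y, ∀ n : ℤ, ((f ^ n) y, x n) ∈ E := by
  simp only [TSPTop, IsPseudoOrbit, hzpow_eq_zpow]

theorem IsPseudoOrbit.neg_of_inv {f : X ≃ₜ X} {D : Set (X × X)} {x : ℤ → X}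
    (hx : IsPseudoOrbit ⇑f⁻¹ {p | (f p.2, f p.1) ∈ D} x) :
    IsPseudoOrbit f D (fun n => x (-n)) := by
  intro n
  simpa [neg_add_eq_sub] using hx (-n - 1)

def interpolateOrbit (f : X ≃ₜ X) (k : ℤ) (x : ℤ → X) (i : ℤ) : X :=
  (f ^ (i % k)) (x (i / k))

theorem interpolateOrbit_mul {k : ℤ} (hk : k ≠ 0) (f : X ≃ₜ X) (x : ℤ → X) (n : ℤ) :
    interpolateOrbit f k x (k * n) = x n := by
  simp [interpolateOrbit, Int.mul_emod_right, Int.mul_ediv_cancel_left _ hk]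

theorem isPseudoOrbit_interpolateOrbit {f : X ≃ₜ X} {k : ℤ} {D : Set (X × X)} {x : ℤ → X}
    (hk : 0 < k) (hD : diagonal X ⊆ D) (hx : IsPseudoOrbit (f ^ k) D x) :
    IsPseudoOrbit f D (interpolateOrbit f k x) := by
  intro i
  have hr₀ : 0 ≤ i % k := Int.emod_nonneg i hk.ne'
  have hi : i % k + k * (i / k) = i := Int.emod_add_mul_ediv i k
  have hstep : f (interpolateOrbit f k x i) = (f ^ (i % k + 1)) (x (i / k)) := by
    rw [← mul_self_zpow]; rfl
  rcases (Int.add_one_le_iff.mpr (Int.emod_lt_of_pos i hk)).lt_or_eq with hlt | heq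
  · obtain ⟨hq, hr⟩ := (Int.ediv_emod_unique (a := i + 1) (q := i / k) hk).2
      ⟨by linear_combination hi, by omega, hlt⟩
    rw [hstep]
    exact hD (by simp [interpolateOrbit, hq, hr])
  · obtain ⟨hq, hr⟩ := (Int.ediv_emod_unique (a := i + 1) (r := 0) (q := i / k + 1) hk).2
      ⟨by linear_combination hi - heq, le_rfl, hk⟩
    rw [hstep, heq]
    simpa [interpolateOrbit, hq, hr] using hx (i / k)

theorem TSPTop.inv {f : X ≃ₜ X} (hf : TSPTop f) : TSPTop f⁻¹ := by
  rw [tspTop_iff] at hf ⊢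
  intro E hE
  obtain ⟨D, hD, hshadow⟩ := hf E hE
  have hcont : Continuous fun p : X × X => (f p.2, f p.1) := by fun_prop
  have hmaps : MapsTo (fun p : X × X => (f p.2, f p.1)) (diagonal X) (diagonal X) := by
    rintro ⟨a, b⟩ (rfl : a = b)
    rfl
  refine ⟨_, hcont.tendsto_nhdsSet hmaps hD, fun x hx => ?_⟩
  obtain ⟨y, hy⟩ := hshadow _ hx.neg_of_inv
  exact ⟨y, fun n => by simpa [inv_zpow'] using hy (-n)⟩

theorem TSPTop.zpow_of_pos {f : X ≃ₜ X} (hf : TSPTop f) {k : ℤ} (hk : 0 < k) :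
    TSPTop (f ^ k) := by
  rw [tspTop_iff] at hf ⊢
  intro E hE
  obtain ⟨D, hD, hshadow⟩ := hf E hE
  refine ⟨D, hD, fun x hx => ?_⟩
  obtain ⟨y, hy⟩ := hshadow _ (isPseudoOrbit_interpolateOrbit hk (subset_of_mem_nhdsSet hD) hx)
  refine ⟨y, fun n => ?_⟩
  simpa [← zpow_mul, interpolateOrbit_mul hk.ne'] using hy (k * n)

theorem TSPTop.zpow {f : X ≃ₜ X} (hf : TSPTop f) {k : ℤ} (hk : k ≠ 0) : TSPTop (f ^ k) := by
  rcases hk.lt_or_gt with hneg | hpos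
  · simpa [zpow_neg] using (hf.zpow_of_pos (neg_pos.mpr hneg)).inv
  · exact hf.zpow_of_pos hpos

end

theorem TSPTop_iff_powers_general {X : Type*} [TopologicalSpace X] (f : X ≃ₜ X) :
    TSPTop f ↔ ∀ k : ℤ, k ≠ 0 → TSPTop (hzpow f k) := by
  simp only [hzpow_eq_zpow]
  exact ⟨fun hf _ hk => hf.zpow hk, fun h => by simpa using h 1 one_ne_zero⟩

/-- A homeomorphism `f` of a first countable, locally compact, paracompact Hausdorff space
has the topological shadowing property iff `f^k` has it for every nonzero integer `k`. -/
theorem TSPTop_iff_powers {X : Type*} [TopologicalSpace X] [T2Space X]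
    [FirstCountableTopology X] [LocallyCompactSpace X] [ParacompactSpace X]
    (f : X ≃ₜ X) :
    TSPTop f ↔ ∀ k : ℤ, k ≠ 0 → TSPTop (hzpow f k) :=
  TSPTop_iff_powers_general f
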